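/- With notation as before (G_v^B obtained from G by identifying the center of a new bowtie with a vertex v of G): for every odd-dominating set D' of G_v^B, the set D' ∩ V(G) is an odd-dominating set of G. Consequently, the number of odd-dominating sets satisfies ods(G_v^B) = 4·ods(G), and χ_os(G_v^B) ≥ χ_os(G). -/
import Mathlib


open SimpleGraph Finset
open scoped Classical

/-- The closed neighborhood `N[v]` of a vertex `v`. -/
def closedNbhd {V : Type*} (G : SimpleGraph V) (v : V) : Set V :=
  insert v (G.neighborSet v)

/-- `D` is an odd-dominating set: `|N[v] ∩ D|` is odd for every vertex `v`. -/
def OddDomSet {V : Type*} (G : SimpleGraph V) (D : Set V) : Prop :=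
  ∀ v, Odd ((closedNbhd G v ∩ D).ncard)

/-- `f` is an odd-sum coloring: a proper coloring with positive integer colors
such that the sum of colors over each closed neighborhood is odd. -/
def IsOddSumColoring {V : Type*} [Fintype V] (G : SimpleGraph V) (f : V → ℕ) : Prop :=
  (∀ v, 0 < f v) ∧ (∀ ⦃a b⦄, G.Adj a b → f a ≠ f b) ∧
  (∀ v, Odd (∑ w ∈ (closedNbhd G v).toFinset, f w))

/-- The odd-sum chromatic number: minimum number of colors used in an odd-sum coloring. -/
noncomputable def chiOS {V : Type*} [Fintype V] (G : SimpleGraph V) : ℕ :=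
  sInf {n | ∃ f : V → ℕ, IsOddSumColoring G f ∧ (Finset.univ.image f).card = n}

/-- `G_v^B`: the graph obtained from `G` by identifying the center of a new bowtie
with the vertex `v`.  The new vertices are `x₁ = inr 0`, `x₂ = inr 1`,
`y₁ = inr 2`, `y₂ = inr 3`; edges are those of `G`, together with
`v x₁, v x₂, v y₁, v y₂, x₁x₂, y₁y₂`. -/
def bowtieAttach {V : Type*} (G : SimpleGraph V) (v : V) : SimpleGraph (V ⊕ Fin 4) :=
  SimpleGraph.fromRel (fun a b =>
    match a, b with
    | .inl x, .inl y => G.Adj x y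
    | .inl x, .inr _ => x = v
    | .inr i, .inr j => (i = 0 ∧ j = 1) ∨ (i = 2 ∧ j = 3)
    | _, _ => False)

/-- The number of odd-dominating sets of `G`. -/
noncomputable def ods {V : Type*} [Fintype V] (G : SimpleGraph V) : ℕ :=
  Nat.card {D : Set V // OddDomSet G D}

section BowtieHelpers

variable {V : Type*} (G : SimpleGraph V) (v : V)

lemma bow_adj_inl_inl (x y : V) :
    (bowtieAttach G v).Adj (.inl x) (.inl y) ↔ G.Adj x y := by
  simp only [bowtieAttach, fromRel_adj]
  constructor
  · rintro ⟨-, h | h⟩; exact h; exact h.symm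
  · intro h; exact ⟨by simp [G.ne_of_adj h], Or.inl h⟩

lemma bow_adj_inl_inr (x : V) (i : Fin 4) :
    (bowtieAttach G v).Adj (.inl x) (.inr i) ↔ x = v := by
  simp [bowtieAttach, fromRel_adj]

lemma bow_adj_inr_inl (x : V) (i : Fin 4) :
    (bowtieAttach G v).Adj (.inr i) (.inl x) ↔ x = v := by
  rw [SimpleGraph.adj_comm]; exact bow_adj_inl_inr G v x i

lemma bow_adj_inr_inr (i j : Fin 4) :
    (bowtieAttach G v).Adj (.inr i) (.inr j) ↔
      ((i = 0 ∧ j = 1) ∨ (i = 2 ∧ j = 3) ∨ (i = 1 ∧ j = 0) ∨ (i = 3 ∧ j = 2)) := by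
  simp only [bowtieAttach, fromRel_adj]
  constructor
  · rintro ⟨-, (h|h)|(h|h)⟩ <;> tauto
  · rintro (⟨rfl,rfl⟩|⟨rfl,rfl⟩|⟨rfl,rfl⟩|⟨rfl,rfl⟩) <;> exact ⟨by simp [Sum.inr.injEq], by tauto⟩

lemma cn_inl (u : V) (hu : u ≠ v) :
    closedNbhd (bowtieAttach G v) (Sum.inl u) = Sum.inl '' closedNbhd G u := by
  ext z
  cases z with
  | inl x =>
    simp [closedNbhd, SimpleGraph.mem_neighborSet, bow_adj_inl_inl]
  | inr i =>
    simp [closedNbhd, SimpleGraph.mem_neighborSet, bow_adj_inl_inr, hu]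

lemma cn_inl_v :
    closedNbhd (bowtieAttach G v) (Sum.inl v) =
      insert (Sum.inr 0) (insert (Sum.inr 1) (insert (Sum.inr 2) (insert (Sum.inr 3)
        (Sum.inl '' closedNbhd G v)))) := by
  ext z
  cases z with
  | inl x =>
    simp [closedNbhd, SimpleGraph.mem_neighborSet, bow_adj_inl_inl]
  | inr i =>
    simp only [closedNbhd, Set.mem_insert_iff, SimpleGraph.mem_neighborSet,
      bow_adj_inl_inr, Set.mem_image]
    constructor
    · rintro (h|h)
      · exact absurd h (by simp)
      · fin_cases i <;> simp
    · rintro -; exact Or.inr trivial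

lemma cn_inr0 : closedNbhd (bowtieAttach G v) (Sum.inr 0) =
    {Sum.inr 0, Sum.inr 1, Sum.inl v} := by
  ext z
  cases z with
  | inl x => simp [closedNbhd, SimpleGraph.mem_neighborSet, bow_adj_inr_inl, eq_comm]
  | inr i =>
    simp only [closedNbhd, Set.mem_insert_iff, SimpleGraph.mem_neighborSet,
      bow_adj_inr_inr, Set.mem_singleton_iff]
    constructor
    · rintro (h|h)
      · left; exact h
      · rcases h with ⟨-,h⟩|⟨h,-⟩|⟨h,-⟩|⟨h,-⟩ <;> simp_all
    · rintro (h|h|h) <;> simp_all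

lemma cn_inr1 : closedNbhd (bowtieAttach G v) (Sum.inr 1) =
    {Sum.inr 0, Sum.inr 1, Sum.inl v} := by
  ext z
  cases z with
  | inl x => simp [closedNbhd, SimpleGraph.mem_neighborSet, bow_adj_inr_inl, eq_comm]
  | inr i =>
    simp only [closedNbhd, Set.mem_insert_iff, SimpleGraph.mem_neighborSet,
      bow_adj_inr_inr, Set.mem_singleton_iff]
    constructor
    · rintro (h|h)
      · right; left; exact h
      · rcases h with ⟨h,-⟩|⟨h,-⟩|⟨-,h⟩|⟨h,-⟩ <;> simp_all
    · rintro (h|h|h) <;> simp_all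

lemma cn_inr2 : closedNbhd (bowtieAttach G v) (Sum.inr 2) =
    {Sum.inr 2, Sum.inr 3, Sum.inl v} := by
  ext z
  cases z with
  | inl x => simp [closedNbhd, SimpleGraph.mem_neighborSet, bow_adj_inr_inl, eq_comm]
  | inr i =>
    simp only [closedNbhd, Set.mem_insert_iff, SimpleGraph.mem_neighborSet,
      bow_adj_inr_inr, Set.mem_singleton_iff]
    constructor
    · rintro (h|h)
      · left; exact h
      · rcases h with ⟨h,-⟩|⟨-,h⟩|⟨h,-⟩|⟨h,-⟩ <;> simp_all
    · rintro (h|h|h) <;> simp_all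

lemma cn_inr3 : closedNbhd (bowtieAttach G v) (Sum.inr 3) =
    {Sum.inr 2, Sum.inr 3, Sum.inl v} := by
  ext z
  cases z with
  | inl x => simp [closedNbhd, SimpleGraph.mem_neighborSet, bow_adj_inr_inl, eq_comm]
  | inr i =>
    simp only [closedNbhd, Set.mem_insert_iff, SimpleGraph.mem_neighborSet,
      bow_adj_inr_inr, Set.mem_singleton_iff]
    constructor
    · rintro (h|h)
      · right; left; exact h
      · rcases h with ⟨h,-⟩|⟨h,-⟩|⟨h,-⟩|⟨-,h⟩ <;> simp_all
    · rintro (h|h|h) <;> simp_all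

lemma ncard_insert_inter {α : Type*} (a : α) (s D : Set α) (ha : a ∉ s) (hs : s.Finite) :
    ((insert a s) ∩ D).ncard = (if a ∈ D then 1 else 0) + (s ∩ D).ncard := by
  by_cases h : a ∈ D
  · rw [Set.insert_inter_of_mem h, if_pos h,
      Set.ncard_insert_of_notMem (fun hc => ha hc.1) (hs.inter_of_left D)]
    omega
  · rw [Set.insert_inter_of_notMem h, if_neg h]; omega

lemma ncard_singleton_inter {α : Type*} (a : α) (D : Set α) :
    (({a} : Set α) ∩ D).ncard = (if a ∈ D then 1 else 0) := by
  by_cases h : a ∈ D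
  · rw [if_pos h]
    have : ({a} : Set α) ∩ D = {a} := by ext z; simp (config := {contextual := true}) [h]
    simp [this]
  · rw [if_neg h]
    have : ({a} : Set α) ∩ D = ∅ := by ext z; simp (config := {contextual := true}) [h]
    simp [this]

lemma image_inter_ncard {V : Type*} (S : Set V) (D' : Set (V ⊕ Fin 4)) :
    ((Sum.inl '' S) ∩ D').ncard = (S ∩ {x | Sum.inl x ∈ D'}).ncard := by
  have : (Sum.inl '' S) ∩ D' = Sum.inl '' (S ∩ {x | Sum.inl x ∈ D'}) := by
    ext z; constructor
    · rintro ⟨⟨x, hx, rfl⟩, hz⟩; exact ⟨x, ⟨hx, hz⟩, rfl⟩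
    · rintro ⟨x, ⟨hx, hm⟩, rfl⟩; exact ⟨⟨x, hx, rfl⟩, hm⟩
  rw [this, Set.ncard_image_of_injective _ Sum.inl_injective]

set_option linter.unusedSectionVars false
variable [Fintype V]

lemma card_A (u : V) (hu : u ≠ v) (D' : Set (V ⊕ Fin 4)) :
    (closedNbhd (bowtieAttach G v) (Sum.inl u) ∩ D').ncard
      = (closedNbhd G u ∩ {x | Sum.inl x ∈ D'}).ncard := by
  rw [cn_inl G v u hu, image_inter_ncard]

lemma card_B (D' : Set (V ⊕ Fin 4)) :
    (closedNbhd (bowtieAttach G v) (Sum.inl v) ∩ D').ncard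
      = (if Sum.inr 0 ∈ D' then 1 else 0) + ((if Sum.inr 1 ∈ D' then 1 else 0) +
        ((if Sum.inr 2 ∈ D' then 1 else 0) + ((if Sum.inr 3 ∈ D' then 1 else 0) +
        (closedNbhd G v ∩ {x | Sum.inl x ∈ D'}).ncard))) := by
  rw [cn_inl_v, ncard_insert_inter _ _ _ (by simp) (Set.toFinite _),
    ncard_insert_inter _ _ _ (by simp) (Set.toFinite _),
    ncard_insert_inter _ _ _ (by simp) (Set.toFinite _),
    ncard_insert_inter _ _ _ (by rintro ⟨x, -, h⟩; exact absurd h (by simp)) (Set.toFinite _),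
    image_inter_ncard]

lemma card_C01 (D' : Set (V ⊕ Fin 4)) (i : Fin 4) (hi : i = 0 ∨ i = 1) :
    (closedNbhd (bowtieAttach G v) (Sum.inr i) ∩ D').ncard
      = (if Sum.inr 0 ∈ D' then 1 else 0) + ((if Sum.inr 1 ∈ D' then 1 else 0) +
        (if Sum.inl v ∈ D' then 1 else 0)) := by
  have h : closedNbhd (bowtieAttach G v) (Sum.inr i) =
      {Sum.inr 0, Sum.inr 1, Sum.inl v} := by
    rcases hi with rfl | rfl
    · exact cn_inr0 G v
    · exact cn_inr1 G v
  rw [h, ncard_insert_inter _ _ _ (by simp) (Set.toFinite _),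
    ncard_insert_inter _ _ _ (by simp) (Set.toFinite _), ncard_singleton_inter]

lemma card_C23 (D' : Set (V ⊕ Fin 4)) (i : Fin 4) (hi : i = 2 ∨ i = 3) :
    (closedNbhd (bowtieAttach G v) (Sum.inr i) ∩ D').ncard
      = (if Sum.inr 2 ∈ D' then 1 else 0) + ((if Sum.inr 3 ∈ D' then 1 else 0) +
        (if Sum.inl v ∈ D' then 1 else 0)) := by
  have h : closedNbhd (bowtieAttach G v) (Sum.inr i) =
      {Sum.inr 2, Sum.inr 3, Sum.inl v} := by
    rcases hi with rfl | rfl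
    · exact cn_inr2 G v
    · exact cn_inr3 G v
  rw [h, ncard_insert_inter _ _ _ (by simp) (Set.toFinite _),
    ncard_insert_inter _ _ _ (by simp) (Set.toFinite _), ncard_singleton_inter]

lemma ods_iff (D' : Set (V ⊕ Fin 4)) :
    OddDomSet (bowtieAttach G v) D' ↔
      (OddDomSet G {x | Sum.inl x ∈ D'} ∧
       (Sum.inr 1 ∈ D' ↔ (Sum.inr 0 ∈ D' ↔ Sum.inl v ∈ D')) ∧
       (Sum.inr 3 ∈ D' ↔ (Sum.inr 2 ∈ D' ↔ Sum.inl v ∈ D'))) := by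
  constructor
  · intro hD'
    have h0 := hD' (Sum.inr 0)
    have h2 := hD' (Sum.inr 2)
    rw [card_C01 G v D' 0 (Or.inl rfl), Nat.odd_iff] at h0
    rw [card_C23 G v D' 2 (Or.inl rfl), Nat.odd_iff] at h2
    refine ⟨fun u => ?_, ?_, ?_⟩
    · by_cases hu : u = v
      · have hv := hD' (Sum.inl v)
        rw [card_B, Nat.odd_iff] at hv
        rw [hu, Nat.odd_iff]
        omega
      · rw [← card_A G v u hu]; exact hD' (Sum.inl u)
    · by_cases ha : Sum.inr 1 ∈ D' <;> by_cases hb : Sum.inr 0 ∈ D' <;>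
        by_cases hc : Sum.inl v ∈ D' <;> simp_all
    · by_cases ha : Sum.inr 3 ∈ D' <;> by_cases hb : Sum.inr 2 ∈ D' <;>
        by_cases hc : Sum.inl v ∈ D' <;> simp_all
  · rintro ⟨hD, h1, h3⟩
    intro z
    match z with
    | Sum.inl u =>
      by_cases hu : u = v
      · rw [hu, card_B, Nat.odd_iff]
        have hv := hD v
        rw [Nat.odd_iff] at hv
        by_cases ha : Sum.inr 0 ∈ D' <;> by_cases hb : Sum.inr 2 ∈ D' <;>
          by_cases hc : Sum.inl v ∈ D' <;> simp_all <;> omega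
      · rw [card_A G v u hu]; exact hD u
    | Sum.inr i =>
      rcases (show i = 0 ∨ i = 1 ∨ i = 2 ∨ i = 3 by revert i; decide) with rfl|rfl|rfl|rfl
      · rw [card_C01 G v D' 0 (Or.inl rfl), Nat.odd_iff]
        by_cases ha : Sum.inr 0 ∈ D' <;> by_cases hc : Sum.inl v ∈ D' <;> simp_all
      · rw [card_C01 G v D' 1 (Or.inr rfl), Nat.odd_iff]
        by_cases ha : Sum.inr 0 ∈ D' <;> by_cases hc : Sum.inl v ∈ D' <;> simp_all
      · rw [card_C23 G v D' 2 (Or.inl rfl), Nat.odd_iff]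
        by_cases ha : Sum.inr 2 ∈ D' <;> by_cases hc : Sum.inl v ∈ D' <;> simp_all
      · rw [card_C23 G v D' 3 (Or.inr rfl), Nat.odd_iff]
        by_cases ha : Sum.inr 2 ∈ D' <;> by_cases hc : Sum.inl v ∈ D' <;> simp_all

def bset {V : Type*} (D : Set V) (v : V) (p q : Prop) : Set (V ⊕ Fin 4) :=
  fun z => Sum.elim (fun x => x ∈ D)
    (fun i => if i = 0 then p else if i = 1 then (p ↔ v ∈ D)
      else if i = 2 then q else (q ↔ v ∈ D)) z

section bset
variable {D : Set V} {p q : Prop}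

lemma mem_bset_inl (x : V) : (Sum.inl x ∈ bset D v p q) = (x ∈ D) := rfl

lemma mem_bset_inr0 : (Sum.inr 0 ∈ bset D v p q) = p := by
  show (if (0 : Fin 4) = 0 then p else if (0 : Fin 4) = 1 then (p ↔ v ∈ D) else if (0 : Fin 4) = 2 then q else (q ↔ v ∈ D)) = p
  rw [if_pos rfl]

lemma mem_bset_inr1 : (Sum.inr 1 ∈ bset D v p q) = (p ↔ v ∈ D) := by
  show (if (1 : Fin 4) = 0 then p else if (1 : Fin 4) = 1 then (p ↔ v ∈ D) else if (1 : Fin 4) = 2 then q else (q ↔ v ∈ D)) = (p ↔ v ∈ D)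
  rw [if_neg (by decide), if_pos rfl]

lemma mem_bset_inr2 : (Sum.inr 2 ∈ bset D v p q) = q := by
  show (if (2 : Fin 4) = 0 then p else if (2 : Fin 4) = 1 then (p ↔ v ∈ D) else if (2 : Fin 4) = 2 then q else (q ↔ v ∈ D)) = q
  rw [if_neg (by decide), if_neg (by decide), if_pos rfl]

lemma mem_bset_inr3 : (Sum.inr 3 ∈ bset D v p q) = (q ↔ v ∈ D) := by
  show (if (3 : Fin 4) = 0 then p else if (3 : Fin 4) = 1 then (p ↔ v ∈ D) else if (3 : Fin 4) = 2 then q else (q ↔ v ∈ D)) = (q ↔ v ∈ D)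
  rw [if_neg (by decide), if_neg (by decide), if_neg (by decide)]

end bset

lemma bset_ods {D : Set V} {p q : Prop} (hD : OddDomSet G D) :
    OddDomSet (bowtieAttach G v) (bset D v p q) := by
  rw [ods_iff]
  refine ⟨?_, ?_, ?_⟩
  · have h : {x | Sum.inl x ∈ bset D v p q} = D := rfl
    rw [h]; exact hD
  · rw [mem_bset_inr1, mem_bset_inr0]
    have h : (Sum.inl v ∈ bset D v p q) = (v ∈ D) := rfl
    rw [h]
  · rw [mem_bset_inr3, mem_bset_inr2]
    have h : (Sum.inl v ∈ bset D v p q) = (v ∈ D) := rfl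
    rw [h]

lemma ods_eq : ods (bowtieAttach G v) = 4 * ods G := by
  have e : {D' : Set (V ⊕ Fin 4) // OddDomSet (bowtieAttach G v) D'} ≃
      ({D : Set V // OddDomSet G D} × Prop × Prop) :=
    { toFun := fun D' => (⟨{x | Sum.inl x ∈ D'.1}, ((ods_iff G v D'.1).mp D'.2).1⟩,
        Sum.inr 0 ∈ D'.1, Sum.inr 2 ∈ D'.1)
      invFun := fun t => ⟨bset t.1.1 v t.2.1 t.2.2, bset_ods G v t.1.2⟩
      left_inv := by
        rintro ⟨D', h⟩
        obtain ⟨hD, h1, h3⟩ := (ods_iff G v D').mp h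
        apply Subtype.ext
        ext z
        cases z with
        | inl x => rw [mem_bset_inl]; rfl
        | inr i =>
          rcases (show i = 0 ∨ i = 1 ∨ i = 2 ∨ i = 3 by revert i; decide)
            with rfl|rfl|rfl|rfl
          · rw [mem_bset_inr0]
          · rw [mem_bset_inr1]
            exact h1.symm
          · rw [mem_bset_inr2]
          · rw [mem_bset_inr3]
            exact h3.symm
      right_inv := by
        rintro ⟨⟨D, hD⟩, p, q⟩
        refine Prod.ext (Subtype.ext ?_) (Prod.ext ?_ ?_)
        · rfl
        · exact mem_bset_inr0 v
        · exact mem_bset_inr2 v }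
  have hProp : Nat.card Prop = 2 := by simp
  rw [ods, Nat.card_congr e, Nat.card_prod, Nat.card_prod, hProp, ods]
  ring

lemma sum_toFinset_eq {α : Type*} (s : Set α) [Fintype s] (t : Finset α)
    (h : ∀ x, x ∈ s ↔ x ∈ t) (f : α → ℕ) :
    ∑ w ∈ s.toFinset, f w = ∑ w ∈ t, f w := by
  apply Finset.sum_congr _ (fun _ _ => rfl)
  ext x
  rw [Set.mem_toFinset, h]

lemma sum_A (f' : V ⊕ Fin 4 → ℕ) (u : V) (hu : u ≠ v) :
    ∑ w ∈ (closedNbhd (bowtieAttach G v) (Sum.inl u)).toFinset, f' w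
      = ∑ w ∈ (closedNbhd G u).toFinset, f' (Sum.inl w) := by
  rw [sum_toFinset_eq _ ((closedNbhd G u).toFinset.image Sum.inl)
    (fun x => by rw [cn_inl G v u hu]; simp),
    Finset.sum_image (fun a _ b _ h => Sum.inl_injective h)]

lemma sum_B (f' : V ⊕ Fin 4 → ℕ) :
    ∑ w ∈ (closedNbhd (bowtieAttach G v) (Sum.inl v)).toFinset, f' w
      = f' (Sum.inr 0) + (f' (Sum.inr 1) + (f' (Sum.inr 2) + (f' (Sum.inr 3) +
        ∑ w ∈ (closedNbhd G v).toFinset, f' (Sum.inl w)))) := by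
  rw [sum_toFinset_eq _ (insert (Sum.inr 0) (insert (Sum.inr 1) (insert (Sum.inr 2)
      (insert (Sum.inr 3) ((closedNbhd G v).toFinset.image Sum.inl)))))
    (fun x => by rw [cn_inl_v]; simp),
    Finset.sum_insert (by simp), Finset.sum_insert (by simp),
    Finset.sum_insert (by simp), Finset.sum_insert (by simp),
    Finset.sum_image (fun a _ b _ h => Sum.inl_injective h)]

lemma sum_C01 (f' : V ⊕ Fin 4 → ℕ) (i : Fin 4) (hi : i = 0 ∨ i = 1) :
    ∑ w ∈ (closedNbhd (bowtieAttach G v) (Sum.inr i)).toFinset, f' w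
      = f' (Sum.inr 0) + (f' (Sum.inr 1) + f' (Sum.inl v)) := by
  have h : closedNbhd (bowtieAttach G v) (Sum.inr i) =
      {Sum.inr 0, Sum.inr 1, Sum.inl v} := by
    rcases hi with rfl | rfl
    · exact cn_inr0 G v
    · exact cn_inr1 G v
  rw [sum_toFinset_eq _ ({Sum.inr 0, Sum.inr 1, Sum.inl v} : Finset (V ⊕ Fin 4))
    (fun x => by rw [h]; simp),
    Finset.sum_insert (by simp), Finset.sum_insert (by simp), Finset.sum_singleton]

lemma sum_C23 (f' : V ⊕ Fin 4 → ℕ) (i : Fin 4) (hi : i = 2 ∨ i = 3) :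
    ∑ w ∈ (closedNbhd (bowtieAttach G v) (Sum.inr i)).toFinset, f' w
      = f' (Sum.inr 2) + (f' (Sum.inr 3) + f' (Sum.inl v)) := by
  have h : closedNbhd (bowtieAttach G v) (Sum.inr i) =
      {Sum.inr 2, Sum.inr 3, Sum.inl v} := by
    rcases hi with rfl | rfl
    · exact cn_inr2 G v
    · exact cn_inr3 G v
  rw [sum_toFinset_eq _ ({Sum.inr 2, Sum.inr 3, Sum.inl v} : Finset (V ⊕ Fin 4))
    (fun x => by rw [h]; simp),
    Finset.sum_insert (by simp), Finset.sum_insert (by simp), Finset.sum_singleton]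

lemma restrict_coloring (f' : V ⊕ Fin 4 → ℕ)
    (hf' : IsOddSumColoring (bowtieAttach G v) f') :
    IsOddSumColoring G (fun x => f' (Sum.inl x)) := by
  obtain ⟨hpos, hprop, hodd⟩ := hf'
  refine ⟨fun x => hpos _, fun a b hab => hprop ((bow_adj_inl_inl G v a b).mpr hab),
    fun u => ?_⟩
  by_cases hu : u = v
  · have h0 := hodd (Sum.inr 0)
    have h2 := hodd (Sum.inr 2)
    have hv := hodd (Sum.inl v)
    rw [sum_C01 G v f' 0 (Or.inl rfl), Nat.odd_iff] at h0
    rw [sum_C23 G v f' 2 (Or.inl rfl), Nat.odd_iff] at h2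
    rw [sum_B, Nat.odd_iff] at hv
    rw [hu]
    show Odd (∑ w ∈ (closedNbhd G v).toFinset, f' (Sum.inl w))
    rw [Nat.odd_iff]
    omega
  · have h := hodd (Sum.inl u)
    rw [sum_A G v f' u hu] at h
    exact h

def bowg (c : ℕ) : Fin 4 → ℕ
  | 0 => c + 1
  | 1 => c + 2 + c % 2
  | 2 => c + 1
  | 3 => c + 2 + c % 2

lemma bowg0 (c : ℕ) : bowg c 0 = c + 1 := rfl
lemma bowg1 (c : ℕ) : bowg c 1 = c + 2 + c % 2 := rfl
lemma bowg2 (c : ℕ) : bowg c 2 = c + 1 := rfl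
lemma bowg3 (c : ℕ) : bowg c 3 = c + 2 + c % 2 := rfl

lemma extend_coloring (f : V → ℕ) (hf : IsOddSumColoring G f) :
    IsOddSumColoring (bowtieAttach G v) (Sum.elim f (bowg (f v))) := by
  obtain ⟨hpos, hprop, hodd⟩ := hf
  refine ⟨?_, ?_, ?_⟩
  · rintro (x | i)
    · exact hpos x
    · rcases (show i = 0 ∨ i = 1 ∨ i = 2 ∨ i = 3 by revert i; decide)
        with rfl|rfl|rfl|rfl <;>
      simp only [Sum.elim_inr, bowg0, bowg1, bowg2, bowg3] <;> omega
  · rintro (a | i) (b | j) hab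
    · exact hprop ((bow_adj_inl_inl G v a b).mp hab)
    · rw [bow_adj_inl_inr] at hab
      rw [hab]
      rcases (show j = 0 ∨ j = 1 ∨ j = 2 ∨ j = 3 by revert j; decide)
        with rfl|rfl|rfl|rfl <;>
      simp only [Sum.elim_inr, Sum.elim_inl, bowg0, bowg1, bowg2, bowg3] <;> omega
    · rw [bow_adj_inr_inl] at hab
      rw [hab]
      rcases (show i = 0 ∨ i = 1 ∨ i = 2 ∨ i = 3 by revert i; decide)
        with rfl|rfl|rfl|rfl <;>
      simp only [Sum.elim_inr, Sum.elim_inl, bowg0, bowg1, bowg2, bowg3] <;> omega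
    · rw [bow_adj_inr_inr] at hab
      rcases hab with ⟨rfl, rfl⟩ | ⟨rfl, rfl⟩ | ⟨rfl, rfl⟩ | ⟨rfl, rfl⟩ <;>
      simp only [Sum.elim_inr, bowg0, bowg1, bowg2, bowg3] <;> omega
  · rintro (u | i)
    · by_cases hu : u = v
      · have hv := hodd v
        rw [Nat.odd_iff] at hv
        rw [hu, sum_B, Nat.odd_iff]
        simp only [Sum.elim_inr, Sum.elim_inl, bowg0, bowg1, bowg2, bowg3]
        omega
      · rw [sum_A G v _ u hu]
        simp only [Sum.elim_inl]
        exact hodd u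
    · rcases (show i = 0 ∨ i = 1 ∨ i = 2 ∨ i = 3 by revert i; decide)
        with rfl|rfl|rfl|rfl
      · rw [sum_C01 G v _ 0 (Or.inl rfl), Nat.odd_iff]
        simp only [Sum.elim_inr, Sum.elim_inl, bowg0, bowg1]
        omega
      · rw [sum_C01 G v _ 1 (Or.inr rfl), Nat.odd_iff]
        simp only [Sum.elim_inr, Sum.elim_inl, bowg0, bowg1]
        omega
      · rw [sum_C23 G v _ 2 (Or.inl rfl), Nat.odd_iff]
        simp only [Sum.elim_inr, Sum.elim_inl, bowg2, bowg3]
        omega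
      · rw [sum_C23 G v _ 3 (Or.inr rfl), Nat.odd_iff]
        simp only [Sum.elim_inr, Sum.elim_inl, bowg2, bowg3]
        omega

lemma chiOS_le : chiOS G ≤ chiOS (bowtieAttach G v) := by
  set S' : Set ℕ := {n | ∃ f : V ⊕ Fin 4 → ℕ,
    IsOddSumColoring (bowtieAttach G v) f ∧ (Finset.univ.image f).card = n} with hS'
  by_cases hne : S'.Nonempty
  · obtain ⟨f', hf', hcard⟩ := Nat.sInf_mem hne
    calc chiOS G ≤ (Finset.univ.image (fun x => f' (Sum.inl x))).card := by
          apply Nat.sInf_le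
          exact ⟨_, restrict_coloring G v f' hf', rfl⟩
      _ ≤ (Finset.univ.image f').card := by
          apply Finset.card_le_card
          intro n hn
          simp only [Finset.mem_image] at hn ⊢
          obtain ⟨x, -, rfl⟩ := hn
          exact ⟨Sum.inl x, Finset.mem_univ _, rfl⟩
      _ = chiOS (bowtieAttach G v) := hcard
  · have h1 : chiOS (bowtieAttach G v) = 0 := by
      rw [chiOS, ← hS', Set.not_nonempty_iff_eq_empty.mp hne, Nat.sInf_empty]
    have h2 : chiOS G = 0 := by
      rw [chiOS]
      have he : {n | ∃ f : V → ℕ, IsOddSumColoring G f ∧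
          (Finset.univ.image f).card = n} = ∅ := by
        rw [Set.eq_empty_iff_forall_notMem]
        rintro n ⟨f, hf, -⟩
        exact hne ⟨_, _, extend_coloring G v f hf, rfl⟩
      rw [he, Nat.sInf_empty]
    omega

end BowtieHelpers

theorem bowtieAttach_restrict_ods_chiOS {V : Type*} [Fintype V]
    (G : SimpleGraph V) (v : V) :
    (∀ D' : Set (V ⊕ Fin 4), OddDomSet (bowtieAttach G v) D' →
      OddDomSet G {x : V | Sum.inl x ∈ D'}) ∧
    ods (bowtieAttach G v) = 4 * ods G ∧
    chiOS G ≤ chiOS (bowtieAttach G v) :=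
  ⟨fun D' h => ((ods_iff G v D').mp h).1, ods_eq G v, chiOS_le G v⟩
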